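/- arXiv:1601.08135 — 3 statements merged into one kernel-verified Lean document; each statement's English description precedes it below -/
import Mathlib

section
/- For any two Hermitian positive definite p×p complex matrices A and B with A ≠ B, one has log det A − log det B > p − tr(A⁻¹B). -/
open Matrix
open scoped ComplexOrder

/-!
Whiten `B` by a Hermitian square root `T` of `A⁻¹`: the matrix `M = T B T` is positive definite,
`tr M = tr (A⁻¹ B)`, `det M = det B / det A`, and `M ≠ 1` because `A ≠ B`. Summing
`log μ ≤ μ - 1` over the eigenvalues `μ` of `M`, strictly for an eigenvalue `μ ≠ 1`, gives
`log det M < tr M - p`.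
-/

namespace Matrix

section CommRing

variable {n R : Type*} [Fintype n] [DecidableEq n] [CommRing R] {A B T : Matrix n n R}

lemma isUnit_det_of_mul_self_eq_inv (hA : IsUnit A.det) (hTT : T * T = A⁻¹) : IsUnit T.det :=
  isUnit_of_mul_isUnit_left (by rw [← det_mul, hTT]; exact isUnit_nonsing_inv_det A hA)

lemma eq_of_mul_mul_eq_one_of_mul_self_eq_inv (hA : IsUnit A.det) (hTT : T * T = A⁻¹)
    (h : T * B * T = 1) : B = A := by
  have hT := isUnit_det_of_mul_self_eq_inv hA hTT
  calc B = T⁻¹ * (T * B * T) * T⁻¹ := by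
        rw [Matrix.mul_assoc T, nonsing_inv_mul_cancel_left _ _ hT,
          mul_nonsing_inv_cancel_right _ _ hT]
    _ = (T * T)⁻¹ := by rw [h, Matrix.mul_one, Matrix.mul_inv_rev]
    _ = A := by rw [hTT, nonsing_inv_nonsing_inv _ hA]

end CommRing

variable {n 𝕜 : Type*} [Fintype n] [DecidableEq n] [RCLike 𝕜] {A B M : Matrix n n 𝕜}

section
open scoped MatrixOrder

lemma PosSemidef.exists_isHermitian_mul_self_eq (hA : A.PosSemidef) :
    ∃ T : Matrix n n 𝕜, T.IsHermitian ∧ T * T = A :=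
  ⟨CFC.sqrt A, (CFC.sqrt_nonneg A).posSemidef.1, CFC.sqrt_mul_sqrt_self A hA.nonneg⟩

end

lemma IsHermitian.eq_one_of_eigenvalues_eq_one (hM : M.IsHermitian)
    (h : ∀ i, hM.eigenvalues i = 1) : M = 1 :=
  CFC.eq_one_of_spectrum_subset_one (R := ℝ) M
    (by rw [hM.spectrum_real_eq_range_eigenvalues]; rintro _ ⟨i, rfl⟩; exact h i)
    hM.isSelfAdjoint

lemma IsHermitian.re_det_eq_prod_eigenvalues (hM : M.IsHermitian) :
    RCLike.re M.det = ∏ i, hM.eigenvalues i := by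
  rw [hM.det_eq_prod_eigenvalues, ← RCLike.ofReal_prod, RCLike.ofReal_re]

lemma IsHermitian.re_trace_eq_sum_eigenvalues (hM : M.IsHermitian) :
    RCLike.re M.trace = ∑ i, hM.eigenvalues i := by
  rw [hM.trace_eq_sum_eigenvalues, ← RCLike.ofReal_sum, RCLike.ofReal_re]

lemma IsHermitian.ofReal_re_det (hM : M.IsHermitian) : (RCLike.re M.det : 𝕜) = M.det := by
  rw [hM.re_det_eq_prod_eigenvalues, hM.det_eq_prod_eigenvalues, RCLike.ofReal_prod]

lemma PosDef.re_det_pos (hM : M.PosDef) : 0 < RCLike.re M.det :=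
  (RCLike.pos_iff.mp hM.det_pos).1

lemma IsHermitian.re_det_inv_mul (hA : A.IsHermitian) (hB : B.IsHermitian) :
    RCLike.re (A⁻¹.det * B.det) = RCLike.re B.det / RCLike.re A.det := by
  conv_lhs => rw [det_nonsing_inv, Ring.inverse_eq_inv', ← hA.ofReal_re_det, ← hB.ofReal_re_det,
    ← RCLike.ofReal_inv, ← RCLike.ofReal_mul, RCLike.ofReal_re, inv_mul_eq_div]

theorem PosDef.log_re_det_lt_re_trace_sub_card (hM : M.PosDef) (hM1 : M ≠ 1) :
    Real.log (RCLike.re M.det) < RCLike.re M.trace - Fintype.card n := by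
  set μ := hM.1.eigenvalues
  obtain ⟨j, hj⟩ : ∃ j, μ j ≠ 1 := not_forall.mp (mt hM.1.eq_one_of_eigenvalues_eq_one hM1)
  rw [hM.1.re_det_eq_prod_eigenvalues, hM.1.re_trace_eq_sum_eigenvalues,
    Real.log_prod fun i _ ↦ (hM.eigenvalues_pos i).ne']
  calc ∑ i, Real.log (μ i) < ∑ i, (μ i - 1) :=
        Finset.sum_lt_sum (fun i _ ↦ Real.log_le_sub_one_of_pos (hM.eigenvalues_pos i))
          ⟨j, Finset.mem_univ j, Real.log_lt_sub_one_of_pos (hM.eigenvalues_pos j) hj⟩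
    _ = ∑ i, μ i - Fintype.card n := by simp [Finset.sum_sub_distrib]

end Matrix

/-- For Hermitian positive definite `A ≠ B`,
`log det A − log det B > p − tr(A⁻¹B)`. -/
theorem stmt_0 (p : ℕ) (A B : Matrix (Fin p) (Fin p) ℂ)
    (hA : A.PosDef) (hB : B.PosDef) (hAB : A ≠ B) :
    Real.log A.det.re - Real.log B.det.re > (p : ℝ) - ((A⁻¹ * B).trace).re := by
  obtain ⟨T, hT, hTT⟩ := hA.inv.posSemidef.exists_isHermitian_mul_self_eq
  have hAdet : IsUnit A.det := hA.isUnit.map detMonoidHom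
  have hM : (T * B * T).PosDef := by
    have hT_inj := mulVec_injective_of_isUnit
      ((isUnit_iff_isUnit_det T).mpr (isUnit_det_of_mul_self_eq_inv hAdet hTT))
    simpa only [hT.eq] using hB.conjTranspose_mul_mul_same hT_inj
  have hM1 : T * B * T ≠ 1 := fun h ↦
    hAB (eq_of_mul_mul_eq_one_of_mul_self_eq_inv hAdet hTT h).symm
  have key := hM.log_re_det_lt_re_trace_sub_card hM1
  rw [trace_mul_cycle, hTT, det_mul, det_mul, mul_right_comm, ← det_mul, hTT,
    hA.1.re_det_inv_mul hB.1, Real.log_div hB.re_det_pos.ne' hA.re_det_pos.ne',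
    Fintype.card_fin] at key
  simp only [RCLike.re_to_complex] at key
  linarith
end

section
/- For Hermitian positive definite p×p matrices A and B, if λ₁(A⁻¹) ≥ ... ≥ λ_p(A⁻¹) are the eigenvalues of A⁻¹ in decreasing order and λ₁(B) ≤ ... ≤ λ_p(B) the eigenvalues of B in increasing order, then ∑_{i=1}^p λ_i(A⁻¹)λ_i(B) ≤ tr(A⁻¹B). -/
open Matrix
open scoped ComplexOrder

private lemma trace_form_aux {p : ℕ} (U V : Matrix (Fin p) (Fin p) ℂ) (α β : Fin p → ℝ) :
    ((U * diagonal (Complex.ofReal ∘ α) * star U) *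
      (V * diagonal (Complex.ofReal ∘ β) * star V)).trace
    = ∑ k, ∑ l, ((α k * β l * Complex.normSq ((star U * V) k l) : ℝ) : ℂ) := by
  set M := star U * V with hM
  have h1 : (U * diagonal (Complex.ofReal ∘ α) * star U) *
      (V * diagonal (Complex.ofReal ∘ β) * star V)
      = U * ((diagonal (Complex.ofReal ∘ α) * star U) *
        (V * diagonal (Complex.ofReal ∘ β) * star V)) := by
    simp only [Matrix.mul_assoc]
  have h2 : ((diagonal (Complex.ofReal ∘ α) * star U) *
        (V * diagonal (Complex.ofReal ∘ β) * star V)) * U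
      = diagonal (Complex.ofReal ∘ α) * (M * (diagonal (Complex.ofReal ∘ β) * star M)) := by
    simp only [hM, Matrix.star_mul, star_star, Matrix.mul_assoc]
  rw [h1, trace_mul_comm, h2]
  simp only [Matrix.trace, Matrix.diag, mul_apply, diagonal_apply, ite_mul, mul_ite,
    zero_mul, mul_zero, Finset.sum_ite_eq, Finset.sum_ite_eq', Finset.mem_univ, if_true,
    star_apply, conjTranspose_apply, Function.comp_apply]
  refine Finset.sum_congr rfl fun k _ => ?_
  rw [Finset.mul_sum]
  refine Finset.sum_congr rfl fun l _ => ?_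
  push_cast [← Complex.mul_conj, RCLike.star_def]
  ring

private lemma rearr_aux {p : ℕ} (α β : Fin p → ℝ) (d : Matrix (Fin p) (Fin p) ℝ)
    (hd : d ∈ doublyStochastic ℝ (Fin p)) (σ τ : Equiv.Perm (Fin p))
    (hσ : Antitone fun i => α (σ i)) (hτ : Monotone fun i => β (τ i)) :
    ∑ i, α (σ i) * β (τ i) ≤ ∑ k, ∑ l, α k * β l * d k l := by
  obtain ⟨w, hw0, hw1, hwd⟩ := exists_eq_sum_perm_of_mem_doublyStochastic hd
  have hav : Antivary (fun i => α (σ i)) (fun i => β (τ i)) := by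
    intro i j h
    exact hσ (le_of_not_gt fun hji => (hτ hji.le).not_gt h)
  have hperm : ∀ π : Equiv.Perm (Fin p),
      ∑ i, α (σ i) * β (τ i) ≤ ∑ k, α k * β (π k) := by
    intro π
    calc ∑ i, α (σ i) * β (τ i)
        ≤ ∑ i, α (σ i) * β (τ (((σ.trans π).trans τ.symm) i)) :=
          hav.sum_mul_le_sum_mul_comp_perm
      _ = ∑ i, α (σ i) * β (π (σ i)) := by
          simp [Equiv.trans_apply, Equiv.apply_symm_apply]
      _ = ∑ k, α k * β (π k) := Equiv.sum_comp σ (fun k => α k * β (π k))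
  have hRHS : ∑ k, ∑ l, α k * β l * d k l
      = ∑ π : Equiv.Perm (Fin p), w π * ∑ k, α k * β (π k) := by
    have entry : ∀ k l, d k l = ∑ π : Equiv.Perm (Fin p),
        w π * (if π k = l then 1 else 0) := by
      intro k l
      rw [← hwd]
      simp [Matrix.sum_apply, Equiv.Perm.permMatrix, PEquiv.toMatrix_apply,
        Equiv.toPEquiv_apply]
    calc ∑ k, ∑ l, α k * β l * d k l
        = ∑ k, ∑ l, ∑ π : Equiv.Perm (Fin p),
            α k * β l * (w π * if π k = l then 1 else 0) := by
          refine Finset.sum_congr rfl fun k _ => Finset.sum_congr rfl fun l _ => ?_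
          rw [entry k l, Finset.mul_sum]
      _ = ∑ k, ∑ π : Equiv.Perm (Fin p), ∑ l,
            α k * β l * (w π * if π k = l then 1 else 0) := by
          exact Finset.sum_congr rfl fun k _ => Finset.sum_comm
      _ = ∑ π : Equiv.Perm (Fin p), ∑ k, ∑ l,
            α k * β l * (w π * if π k = l then 1 else 0) := Finset.sum_comm
      _ = ∑ π : Equiv.Perm (Fin p), w π * ∑ k, α k * β (π k) := by
          refine Finset.sum_congr rfl fun π _ => ?_
          rw [Finset.mul_sum]
          refine Finset.sum_congr rfl fun k _ => ?_
          simp only [mul_ite, mul_one, mul_zero, Finset.sum_ite_eq, Finset.sum_ite_eq',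
            Finset.mem_univ, if_true]
          ring
  calc ∑ i, α (σ i) * β (τ i)
      = ∑ π : Equiv.Perm (Fin p), w π * ∑ i, α (σ i) * β (τ i) := by
        rw [← Finset.sum_mul, hw1, one_mul]
    _ ≤ ∑ π : Equiv.Perm (Fin p), w π * ∑ k, α k * β (π k) :=
        Finset.sum_le_sum fun π _ => mul_le_mul_of_nonneg_left (hperm π) (hw0 π)
    _ = ∑ k, ∑ l, α k * β l * d k l := hRHS.symm

/-- Hardy–Littlewood rearrangement: if the eigenvalues of `A⁻¹` are enumerated in
decreasing order and those of `B` in increasing order, then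
`∑ λ_i(A⁻¹) λ_i(B) ≤ tr(A⁻¹ B)`. -/
theorem stmt_1 (p : ℕ) (A B : Matrix (Fin p) (Fin p) ℂ)
    (hA : A.PosDef) (hB : B.PosDef)
    (σ τ : Equiv.Perm (Fin p))
    (hσ : Antitone fun i => (hA.1.inv).eigenvalues (σ i))
    (hτ : Monotone fun i => hB.1.eigenvalues (τ i)) :
    ∑ i : Fin p, (hA.1.inv).eigenvalues (σ i) * hB.1.eigenvalues (τ i)
      ≤ ((A⁻¹ * B).trace).re := by
  have HA : (A⁻¹).IsHermitian := hA.1.inv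
  have HB : B.IsHermitian := hB.1
  set α : Fin p → ℝ := (hA.1.inv).eigenvalues with hα
  set β : Fin p → ℝ := hB.1.eigenvalues with hβ
  set U : Matrix (Fin p) (Fin p) ℂ := (IsHermitian.eigenvectorUnitary hA.1.inv : Matrix (Fin p) (Fin p) ℂ) with hU
  set V : Matrix (Fin p) (Fin p) ℂ := (IsHermitian.eigenvectorUnitary hB.1 : Matrix (Fin p) (Fin p) ℂ) with hV
  set M : Matrix (Fin p) (Fin p) ℂ := star U * V with hMdef
  set d : Matrix (Fin p) (Fin p) ℝ := Matrix.of fun k l => Complex.normSq (M k l) with hd'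
  have hMmem : M ∈ Matrix.unitaryGroup (Fin p) ℂ :=
    mul_mem (Unitary.star_mem (IsHermitian.eigenvectorUnitary hA.1.inv).2)
      (IsHermitian.eigenvectorUnitary hB.1).2
  have hM1 : M * star M = 1 := mem_unitaryGroup_iff.mp hMmem
  have hM2 : star M * M = 1 := mem_unitaryGroup_iff'.mp hMmem
  have hd : d ∈ doublyStochastic ℝ (Fin p) := by
    rw [mem_doublyStochastic_iff_sum]
    refine ⟨fun k l => Complex.normSq_nonneg _, fun k => ?_, fun l => ?_⟩
    · have h := congrFun (congrFun hM1 k) k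
      simp only [mul_apply, Matrix.star_apply, RCLike.star_def, Complex.mul_conj,
        Matrix.one_apply_eq] at h
      have h2 : ((∑ l, Complex.normSq (M k l) : ℝ) : ℂ) = 1 := by
        push_cast
        exact h
      exact_mod_cast h2
    · have h := congrFun (congrFun hM2 l) l
      simp only [mul_apply, Matrix.star_apply, RCLike.star_def, Matrix.one_apply_eq] at h
      have h' : ∑ k, (Complex.normSq (M k l) : ℂ) = 1 := by
        rw [← h]
        refine Finset.sum_congr rfl fun k _ => ?_
        rw [mul_comm, Complex.mul_conj]
      have h2 : ((∑ k, Complex.normSq (M k l) : ℝ) : ℂ) = 1 := by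
        push_cast
        exact h'
      exact_mod_cast h2
  have htr : (A⁻¹ * B).trace = ((∑ k, ∑ l, α k * β l * d k l : ℝ) : ℂ) := by
    have hspecA : A⁻¹ = U * diagonal (Complex.ofReal ∘ α) * star U :=
      (hA.1.inv).spectral_theorem
    have hspecB : B = V * diagonal (Complex.ofReal ∘ β) * star V :=
      hB.1.spectral_theorem
    rw [hspecA, hspecB, trace_form_aux]
    push_cast
    rfl
  rw [htr, Complex.ofReal_re]
  exact rearr_aux α β d hd σ τ hσ hτ
end

section
/- Define L(A) = −log det(𝟏 − A) on the set of Hermitian p×p matrices A with A < 𝟏. Then the convex (Legendre–Fenchel) dual L*(X) = sup_{Y Hermitian, Y < 𝟏} { tr(XY) − L(Y) } equals tr X − p − log det X for Hermitian positive definite X (and equals +∞ if X is not positive definite). -/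
/-!
Summing `log λ ≤ λ - 1` over the eigenvalues gives `log det W ≤ tr W - p` for every positive
definite `W`. Applied to `W = X^{1/2} (1 - Y) X^{1/2}` this bounds
`tr (X Y) + log det (1 - Y)` by `tr X - p - log det X`, with equality at `Y = 1 - X⁻¹`.
If `X` is not positive definite, pick `x ≠ 0` with `x* X x ≤ 0`; along `Y = -t x x*`, `t → ∞`,
the trace term stays nonnegative while `log det (1 - Y) = log (1 + t |x|²)` is unbounded.
-/

open Matrix
open scoped ComplexOrder

namespace Matrix

variable {n : Type*} [Fintype n]

lemma trace_mul_vecMulVec_star (X : Matrix n n ℂ) (x : n → ℂ) :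
    (X * vecMulVec x (star x)).trace = star x ⬝ᵥ X *ᵥ x := by
  rw [mul_vecMulVec, trace_vecMulVec, dotProduct_comm]

lemma IsHermitian.exists_re_dotProduct_mulVec_nonpos {X : Matrix n n ℂ} (hX : X.IsHermitian)
    (h : ¬X.PosDef) : ∃ x ≠ 0, (star x ⬝ᵥ X *ᵥ x).re ≤ 0 := by
  contrapose! h
  refine PosDef.of_dotProduct_mulVec_pos hX fun x hx => Complex.pos_iff.mpr ⟨h x hx, ?_⟩
  exact (hX.im_star_dotProduct_mulVec_self x).symm

variable [DecidableEq n]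

lemma IsHermitian.star_det {A : Matrix n n ℂ} (hA : A.IsHermitian) : star A.det = A.det := by
  rw [← det_conjTranspose, hA.eq]

lemma IsHermitian.im_det {A : Matrix n n ℂ} (hA : A.IsHermitian) : A.det.im = 0 :=
  Complex.conj_eq_iff_im.mp hA.star_det

lemma IsHermitian.ofReal_re_det_s4 {A : Matrix n n ℂ} (hA : A.IsHermitian) :
    (A.det.re : ℂ) = A.det :=
  Complex.conj_eq_iff_re.mp hA.star_det

lemma PosDef.re_det_pos_s4 {A : Matrix n n ℂ} (hA : A.PosDef) : 0 < A.det.re :=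
  (Complex.pos_iff.mp hA.det_pos).1

lemma PosDef.log_re_det_le {W : Matrix n n ℂ} (hW : W.PosDef) :
    Real.log W.det.re ≤ W.trace.re - Fintype.card n := by
  have hdet : W.det.re = ∏ i, hW.1.eigenvalues i := by
    rw [hW.1.det_eq_prod_eigenvalues]; exact_mod_cast Complex.ofReal_re _
  have htr : W.trace.re = ∑ i, hW.1.eigenvalues i := by
    rw [hW.1.trace_eq_sum_eigenvalues]; exact_mod_cast Complex.ofReal_re _
  rw [hdet, htr, Real.log_prod fun i _ => (hW.eigenvalues_pos i).ne']
  calc ∑ i, Real.log (hW.1.eigenvalues i) ≤ ∑ i, (hW.1.eigenvalues i - 1) :=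
        Finset.sum_le_sum fun i _ => Real.log_le_sub_one_of_pos (hW.eigenvalues_pos i)
    _ = ∑ i, hW.1.eigenvalues i - Fintype.card n := by simp

open scoped MatrixOrder in
lemma PosDef.exists_isHermitian_isUnit_mul_self_eq {X : Matrix n n ℂ} (hX : X.PosDef) :
    ∃ B : Matrix n n ℂ, B.IsHermitian ∧ IsUnit B ∧ B * B = X := by
  have hB := CFC.sqrt_mul_sqrt_self X hX.posSemidef.nonneg
  refine ⟨CFC.sqrt X, (CFC.sqrt_nonneg X).posSemidef.1, ?_, hB⟩
  rw [isUnit_iff_isUnit_det]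
  refine isUnit_of_mul_isUnit_left (y := (CFC.sqrt X).det) ?_
  rw [← det_mul, hB]
  exact (isUnit_iff_isUnit_det X).mp hX.isUnit

lemma PosDef.log_re_det_add_log_re_det_le {X Z : Matrix n n ℂ} (hX : X.PosDef) (hZ : Z.PosDef) :
    Real.log X.det.re + Real.log Z.det.re ≤ (X * Z).trace.re - Fintype.card n := by
  obtain ⟨B, hBH, hBu, rfl⟩ := hX.exists_isHermitian_isUnit_mul_self_eq
  have hW : (B * Z * B).PosDef := by
    have := hBu.posDef_star_left_conjugate_iff.mpr hZ
    rwa [star_eq_conjTranspose, hBH.eq] at this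
  have htr : (B * Z * B).trace = (B * B * Z).trace := by
    rw [trace_mul_cycle, Matrix.mul_assoc]
  have hdet : (B * Z * B).det.re = (B * B).det.re * Z.det.re := by
    rw [show (B * Z * B).det = (B * B).det * Z.det by simp only [det_mul]; ring,
      Complex.mul_re, hZ.1.im_det, mul_zero, sub_zero]
  rw [← Real.log_mul hX.re_det_pos_s4.ne' hZ.re_det_pos_s4.ne', ← hdet, ← htr]
  exact hW.log_re_det_le

lemma PosDef.trace_mul_re_add_log_re_det_le {X Y : Matrix n n ℂ} (hX : X.PosDef)
    (hY : (1 - Y).PosDef) :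
    (X * Y).trace.re + Real.log (1 - Y).det.re ≤
      X.trace.re - Fintype.card n - Real.log X.det.re := by
  have key := hX.log_re_det_add_log_re_det_le hY
  rw [mul_sub, mul_one, trace_sub, Complex.sub_re] at key
  linarith

lemma PosDef.trace_mul_re_add_log_re_det_one_sub_inv {X : Matrix n n ℂ} (hX : X.PosDef) :
    (X * (1 - X⁻¹)).trace.re + Real.log (1 - (1 - X⁻¹)).det.re =
      X.trace.re - Fintype.card n - Real.log X.det.re := by
  have hdet : X⁻¹.det.re = X.det.re⁻¹ := by
    rw [det_nonsing_inv, Ring.inverse_eq_inv']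
    conv_lhs => rw [← hX.1.ofReal_re_det_s4]
    rw [← Complex.ofReal_inv, Complex.ofReal_re]
  rw [sub_sub_cancel, hdet, Real.log_inv, mul_sub, mul_one,
    mul_nonsing_inv _ ((isUnit_iff_isUnit_det X).mp hX.isUnit)]
  simp only [trace_sub, trace_one, Complex.sub_re, Complex.natCast_re]
  ring

lemma re_det_one_add_smul_vecMulVec_star (t : ℝ) (x : n → ℂ) :
    (1 + t • vecMulVec x (star x)).det.re = 1 + t * (star x ⬝ᵥ x).re := by
  rw [← smul_vecMulVec, vecMulVec_eq Unit, det_one_add_replicateCol_mul_replicateRow,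
    dotProduct_smul, Complex.add_re, Complex.one_re, Complex.smul_re, smul_eq_mul]

lemma IsHermitian.exists_lt_trace_mul_re_add_log_re_det {X : Matrix n n ℂ}
    (hX : X.IsHermitian) (h : ¬X.PosDef) (M : ℝ) :
    ∃ Y : Matrix n n ℂ, Y.IsHermitian ∧ (1 - Y).PosDef ∧
      M < (X * Y).trace.re + Real.log (1 - Y).det.re := by
  obtain ⟨x, hx, hq⟩ := hX.exists_re_dotProduct_mulVec_nonpos h
  have hs : 0 < (star x ⬝ᵥ x).re := (Complex.pos_iff.mp (dotProduct_star_self_pos_iff.mpr hx)).1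
  set t := Real.exp M / (star x ⬝ᵥ x).re
  have hP : (t • vecMulVec x (star x)).PosSemidef :=
    (posSemidef_vecMulVec_self_star x).smul (by positivity)
  refine ⟨-(t • vecMulVec x (star x)), hP.1.neg, ?_, ?_⟩
  · rw [sub_neg_eq_add]
    exact PosDef.one.add_posSemidef hP
  have htr : (X * -(t • vecMulVec x (star x))).trace.re = -(t * (star x ⬝ᵥ X *ᵥ x).re) := by
    rw [mul_neg, Matrix.mul_smul, trace_neg, trace_smul, trace_mul_vecMulVec_star, Complex.neg_re,
      Complex.smul_re, smul_eq_mul]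
  have hdet : (1 - -(t • vecMulVec x (star x))).det.re = 1 + Real.exp M := by
    rw [sub_neg_eq_add, re_det_one_add_smul_vecMulVec_star, div_mul_cancel₀ _ hs.ne']
  have hlog : M < Real.log (1 + Real.exp M) := by
    rw [Real.lt_log_iff_exp_lt (by positivity)]
    linarith
  rw [htr, hdet]
  linarith [mul_nonpos_of_nonneg_of_nonpos (by positivity : 0 ≤ t) hq]

end Matrix

/-- The Legendre–Fenchel dual of `L(Y) = −log det(1 − Y)` (defined on Hermitian `Y < 1`)
equals `tr X − p − log det X` for Hermitian positive definite `X`, and is `+∞` otherwise. -/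
theorem stmt_4 (p : ℕ) (X : Matrix (Fin p) (Fin p) ℂ) (hX : X.IsHermitian) :
    (X.PosDef →
      IsLUB { t : ℝ | ∃ Y : Matrix (Fin p) (Fin p) ℂ, Y.IsHermitian ∧ (1 - Y).PosDef ∧
          t = ((X * Y).trace).re + Real.log ((1 - Y).det).re }
        (X.trace.re - p - Real.log X.det.re)) ∧
    (¬ X.PosDef → ∀ M : ℝ, ∃ Y : Matrix (Fin p) (Fin p) ℂ,
        Y.IsHermitian ∧ (1 - Y).PosDef ∧
        M < ((X * Y).trace).re + Real.log ((1 - Y).det).re) := by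
  refine ⟨fun hXpd => ⟨?_, fun b hb => hb ?_⟩, hX.exists_lt_trace_mul_re_add_log_re_det⟩
  · rintro t ⟨Y, -, hY, rfl⟩
    simpa using hXpd.trace_mul_re_add_log_re_det_le hY
  · refine ⟨1 - X⁻¹, isHermitian_one.sub hX.inv, by rwa [sub_sub_cancel, posDef_inv_iff], ?_⟩
    simpa using (hXpd.trace_mul_re_add_log_re_det_one_sub_inv).symm
end
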